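/- For every ω ∈ {0,1}^ℕ the set p_ω := Λ_ω ∩ 𝒫 is nonempty and connected, and the connected component of Λ_ω containing p_ω is unbounded. Moreover Λ_ω ∩ Λ_{ω'} = ∅ whenever ω ≠ ω'. -/

import Mathlib

noncomputable section

open Filter Topology

namespace TMH

/-- the trace map `f(x,y) = (x²(y−2)+2, x²y²(y−2)+2)` -/
def tmap (p : ℝ × ℝ) : ℝ × ℝ :=
  (p.1 ^ 2 * (p.2 - 2) + 2, p.1 ^ 2 * p.2 ^ 2 * (p.2 - 2) + 2)

/-- the strip `S = {(x,y) : |x| ≤ 1, y ≤ x² − 2}` -/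
def S : Set (ℝ × ℝ) := {p | |p.1| ≤ 1 ∧ p.2 ≤ p.1 ^ 2 - 2}

/-- the parabola `𝒫 = {(x,y) : y = x² − 2}` -/
def Par : Set (ℝ × ℝ) := {p | p.2 = p.1 ^ 2 - 2}

/-- the domain `𝒰` of the inverse branches `F_{±,+}` -/
def domU : Set (ℝ × ℝ) :=
  {p | p.1 < 2 ∧ p.2 < 2 ∧ 0 < p.2 - 4 * p.1 + 6} ∪
  {p | 2 < p.1 ∧ 2 < p.2 ∧ 0 < p.2 - 4 * p.1 + 6}

/-- the inverse branches `F_{ε,η}` of the trace map -/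
def Fb (e h : ℝ) (p : ℝ × ℝ) : ℝ × ℝ :=
  (e * Real.sqrt ((2 - p.1) / (2 - h * Real.sqrt ((2 - p.2) / (2 - p.1)))),
    h * Real.sqrt ((2 - p.2) / (2 - p.1)))

def F0 : ℝ × ℝ → ℝ × ℝ := Fb (-1) (-1)
def F1 : ℝ × ℝ → ℝ × ℝ := Fb 1 (-1)
def F2 : ℝ × ℝ → ℝ × ℝ := Fb (-1) 1
def F3 : ℝ × ℝ → ℝ × ℝ := Fb 1 1

end TMH
namespace TMH

/-- `Λ(S) = ⋂_{n ≥ 0} f^{−n}(S)`: points whose whole forward orbit stays in `S` -/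
def LambdaS : Set (ℝ × ℝ) := {p | ∀ n : ℕ, tmap^[n] p ∈ S}

def Fsel (b : Bool) : ℝ × ℝ → ℝ × ℝ := if b then F1 else F0

/-- `Fcomp ω n = F_{ω 0} ∘ F_{ω 1} ∘ ⋯ ∘ F_{ω (n−1)}` -/
def Fcomp (ω : ℕ → Bool) : ℕ → (ℝ × ℝ → ℝ × ℝ)
  | 0 => id
  | n + 1 => Fcomp ω n ∘ Fsel (ω n)

/-- the fiber `Λ_ω = ⋂_{n ≥ 1} (F_{ω_1} ∘ ⋯ ∘ F_{ω_n})(S)` -/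
def Lambda (ω : ℕ → Bool) : Set (ℝ × ℝ) := ⋂ n : ℕ, Fcomp ω (n + 1) '' S

end TMH

/-!
Both branches `F₀, F₁` send `(x, y) ∈ S` to `(∓√((2 - x)/(2 + u)), -u)` with
`u = √((2 - y)/(2 - x)) ≥ 1`; they are right inverses of `f` on `S`, and on `𝒫 ∩ S` they act on
the first coordinate as the `1/2`-contractions `x ↦ ∓√(2 - √(2 + x))`. So `Λ_ω ∩ 𝒫` is a nested
intersection of nonempty compact sets whose first coordinates shrink to a point, and `ω` is read
off any point of `Λ_ω` from the signs of the first coordinates along its forward `f`-orbit.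
For unboundedness, the images of the strip cut off at rapidly growing depths are nested compact
connected sets containing `p_ω` and reaching arbitrarily low, and a nested intersection of compact
connected sets is connected.
-/

theorem IsPreconnected.iInter_of_directed_isCompact {X ι : Type*} [TopologicalSpace X]
    [T2Space X] [Nonempty ι] {K : ι → Set X} (hd : Directed (· ⊇ ·) K)
    (hc : ∀ i, IsCompact (K i)) (hK : ∀ i, IsPreconnected (K i)) :
    IsPreconnected (⋂ i, K i) := by
  have hZ : IsClosed (⋂ i, K i) := isClosed_iInter fun i => (hc i).isClosed
  have hZc : IsCompact (⋂ i, K i) :=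
    (hc (Classical.arbitrary ι)).of_isClosed_subset hZ (Set.iInter_subset _ _)
  rw [isPreconnected_iff_subset_of_fully_disjoint_closed hZ]
  intro a b ha hb hab hdisj
  obtain ⟨U, V, hU, hV, haU, hbV, hUV⟩ := SeparatedNhds.of_isCompact_isCompact
    (hZc.inter_right ha) (hZc.inter_right hb)
    (hdisj.mono Set.inter_subset_right Set.inter_subset_right)
  have hZUV : (⋂ i, K i) ⊆ U ∪ V := fun x hx =>
    (hab hx).imp (fun h => haU ⟨hx, h⟩) (fun h => hbV ⟨hx, h⟩)
  -- By compactness some `K i` already lies in `U ∪ V`; being preconnected, it lies on one side.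
  obtain ⟨i, hi⟩ := exists_subset_nhds_of_isCompact hd hc fun x hx =>
    (hU.union hV).mem_nhds (hZUV hx)
  rcases (hK i).subset_or_subset hU hV hUV hi with h | h
  · refine Or.inl fun x hx => (hab hx).resolve_right fun hxb => ?_
    exact Set.disjoint_left.mp hUV (h (Set.iInter_subset K i hx)) (hbV ⟨hx, hxb⟩)
  · refine Or.inr fun x hx => (hab hx).resolve_left fun hxa => ?_
    exact Set.disjoint_left.mp hUV (haU ⟨hx, hxa⟩) (h (Set.iInter_subset K i hx))

namespace TMH

open Set Real

def boolSign (b : Bool) : ℝ := if b then 1 else -1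

lemma boolSign_sq (b : Bool) : boolSign b ^ 2 = 1 := by cases b <;> norm_num [boolSign]

lemma abs_boolSign (b : Bool) : |boolSign b| = 1 := by cases b <;> norm_num [boolSign]

def sqrtRatio (p : ℝ × ℝ) : ℝ := √((2 - p.2) / (2 - p.1))

lemma Fsel_apply (b : Bool) (p : ℝ × ℝ) :
    Fsel b p = (boolSign b * √((2 - p.1) / (2 + sqrtRatio p)), -sqrtRatio p) := by
  cases b <;> simp [Fsel, F0, F1, Fb, boolSign, sqrtRatio]

section Strip

variable {p : ℝ × ℝ}

lemma bounds_of_mem_S (hp : p ∈ S) : -1 ≤ p.1 ∧ p.1 ≤ 1 ∧ p.2 ≤ -1 := by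
  obtain ⟨h₁, h₂⟩ := abs_le.mp hp.1
  exact ⟨h₁, h₂, by nlinarith [hp.2]⟩

lemma sqrtRatio_sq_mul (hp : p ∈ S) : sqrtRatio p ^ 2 * (2 - p.1) = 2 - p.2 := by
  obtain ⟨-, h₂, h₃⟩ := bounds_of_mem_S hp
  rw [sqrtRatio, sq_sqrt (div_nonneg (by linarith) (by linarith)), div_mul_cancel₀]
  linarith

lemma two_add_fst_le_sqrtRatio_sq (hp : p ∈ S) : 2 + p.1 ≤ sqrtRatio p ^ 2 := by
  obtain ⟨-, h₂, -⟩ := bounds_of_mem_S hp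
  nlinarith [sqrtRatio_sq_mul hp, hp.2]

lemma sqrtRatio_sq_mem_Icc (hp : p ∈ S) :
    sqrtRatio p ^ 2 ∈ Icc ((2 - p.2) / 3) (2 - p.2) := by
  obtain ⟨h₁, h₂, h₃⟩ := bounds_of_mem_S hp
  have h := sqrtRatio_sq_mul hp
  constructor <;> nlinarith [sq_nonneg (sqrtRatio p)]

lemma one_le_sqrtRatio (hp : p ∈ S) : 1 ≤ sqrtRatio p := by
  have h₀ : 0 ≤ sqrtRatio p := sqrt_nonneg _
  nlinarith [two_add_fst_le_sqrtRatio_sq hp, (bounds_of_mem_S hp).1]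

end Strip

section Branches

variable (b : Bool) {p : ℝ × ℝ}

lemma Fsel_snd : (Fsel b p).2 = -sqrtRatio p := by rw [Fsel_apply]

lemma Fsel_fst_sq_mul (hp : p ∈ S) : (Fsel b p).1 ^ 2 * (2 + sqrtRatio p) = 2 - p.1 := by
  obtain ⟨-, h₂, -⟩ := bounds_of_mem_S hp
  have hu := one_le_sqrtRatio hp
  rw [Fsel_apply, mul_pow, boolSign_sq, one_mul, sq_sqrt (div_nonneg (by linarith) (by linarith)),
    div_mul_cancel₀ _ (by linarith)]

lemma mapsTo_Fsel_S : MapsTo (Fsel b) S S := by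
  intro q hq
  obtain ⟨h₁, -, -⟩ := bounds_of_mem_S hq
  have hu := one_le_sqrtRatio hq
  have hX := Fsel_fst_sq_mul b hq
  refine ⟨(sq_le_one_iff_abs_le_one _).mp (by nlinarith), ?_⟩
  rw [Fsel_snd]
  nlinarith [two_add_fst_le_sqrtRatio_sq hq]

lemma tmap_Fsel (hp : p ∈ S) : tmap (Fsel b p) = p := by
  have hX := Fsel_fst_sq_mul b hp
  have hu := sqrtRatio_sq_mul hp
  ext <;> simp only [tmap, Fsel_snd]
  · linear_combination (-1) * hX
  · linear_combination (-sqrtRatio p ^ 2) * hX - hu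

lemma boolSign_mul_Fsel_fst_pos (hp : p ∈ S) : 0 < boolSign b * (Fsel b p).1 := by
  obtain ⟨-, h₂, -⟩ := bounds_of_mem_S hp
  have hu := one_le_sqrtRatio hp
  rw [Fsel_apply, ← mul_assoc, ← sq, boolSign_sq, one_mul]
  exact sqrt_pos.mpr (div_pos (by linarith) (by linarith))

lemma mem_Par_of_Fsel_mem_Par (hp : p ∈ S) (h : Fsel b p ∈ Par) : p ∈ Par := by
  have hX := Fsel_fst_sq_mul b hp
  have h' : -sqrtRatio p = (Fsel b p).1 ^ 2 - 2 := by rw [← Fsel_snd b]; exact h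
  have hu : sqrtRatio p ^ 2 = 2 + p.1 := by linear_combination (-(2 + sqrtRatio p)) * h' - hX
  show p.2 = p.1 ^ 2 - 2
  linear_combination sqrtRatio_sq_mul hp - (2 - p.1) * hu

lemma continuousOn_sqrtRatio : ContinuousOn sqrtRatio S :=
  continuous_sqrt.comp_continuousOn <| ContinuousOn.div (by fun_prop) (by fun_prop)
    fun p hp => by linarith [bounds_of_mem_S hp]

lemma continuousOn_Fsel : ContinuousOn (Fsel b) S := by
  rw [show Fsel b = _ from funext (Fsel_apply b)]
  refine .prodMk (continuousOn_const.mul (continuous_sqrt.comp_continuousOn ?_))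
    continuousOn_sqrtRatio.neg
  exact ContinuousOn.div (by fun_prop) (continuousOn_const.add continuousOn_sqrtRatio)
    fun p hp => by linarith [one_le_sqrtRatio hp]

end Branches

section Parabola

def parBranch (b : Bool) (x : ℝ) : ℝ := boolSign b * √(2 - √(2 + x))

lemma Fsel_of_mem_Par_inter_S (b : Bool) {p : ℝ × ℝ} (hp : p ∈ Par ∩ S) :
    Fsel b p = (parBranch b p.1, parBranch b p.1 ^ 2 - 2) := by
  obtain ⟨h₁, h₂, -⟩ := bounds_of_mem_S hp.2
  have hy : p.2 = p.1 ^ 2 - 2 := hp.1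
  have hv : √(2 + p.1) ^ 2 = 2 + p.1 := sq_sqrt (by linarith)
  have hv₀ : 0 ≤ √(2 + p.1) := sqrt_nonneg _
  have hu : sqrtRatio p = √(2 + p.1) := by
    have h : (2 - p.2) / (2 - p.1) = 2 + p.1 := div_eq_of_eq_mul (by linarith) (by rw [hy]; ring)
    rw [sqrtRatio, h]
  have hq : (2 - p.1) / (2 + √(2 + p.1)) = 2 - √(2 + p.1) :=
    div_eq_of_eq_mul (by linarith) (by linear_combination hv)
  ext
  · simp only [Fsel_apply, hu, hq, parBranch]
  · simp only [Fsel_apply, hu, parBranch]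
    rw [mul_pow, boolSign_sq, one_mul, sq_sqrt (by nlinarith)]
    ring

lemma mapsTo_Fsel_Par_inter_S (b : Bool) : MapsTo (Fsel b) (Par ∩ S) (Par ∩ S) := by
  intro p hp
  refine ⟨?_, mapsTo_Fsel_S b hp.2⟩
  rw [Fsel_of_mem_Par_inter_S b hp]
  rfl

lemma abs_sqrt_sub_sqrt_mul_le {s t c : ℝ} (hs : 0 ≤ s) (ht : 0 ≤ t) (h : c ≤ √s + √t) :
    |√s - √t| * c ≤ |s - t| :=
  calc |√s - √t| * c ≤ |√s - √t| * (√s + √t) := mul_le_mul_of_nonneg_left h (abs_nonneg _)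
    _ = |(√s - √t) * (√s + √t)| := by
      rw [abs_mul, abs_of_nonneg (add_nonneg (sqrt_nonneg s) (sqrt_nonneg t))]
    _ = |s - t| := by rw [show (√s - √t) * (√s + √t) = s - t by
        linear_combination sq_sqrt hs - sq_sqrt ht]

lemma abs_parBranch_sub_le (b : Bool) {x y : ℝ} (hx : x ∈ Icc (-1 : ℝ) 1)
    (hy : y ∈ Icc (-1 : ℝ) 1) : |parBranch b x - parBranch b y| ≤ |x - y| / 2 := by
  obtain ⟨hx₁, hx₂⟩ := hx
  obtain ⟨hy₁, hy₂⟩ := hy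
  have hu := sq_sqrt (show 0 ≤ 2 + x by linarith)
  have hv := sq_sqrt (show 0 ≤ 2 + y by linarith)
  have hu₀ := sqrt_nonneg (2 + x)
  have hv₀ := sqrt_nonneg (2 + y)
  have hu₁ : 1 ≤ √(2 + x) ∧ √(2 + x) ≤ 7 / 4 := ⟨by nlinarith, by nlinarith⟩
  have hv₁ : 1 ≤ √(2 + y) ∧ √(2 + y) ≤ 7 / 4 := ⟨by nlinarith, by nlinarith⟩
  have hu₂ : 1 / 2 ≤ √(2 - √(2 + x)) := by rw [le_sqrt' (by norm_num)]; linarith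
  have hv₂ : 1 / 2 ≤ √(2 - √(2 + y)) := by rw [le_sqrt' (by norm_num)]; linarith
  have inner : |√(2 + x) - √(2 + y)| * 2 ≤ |x - y| := by
    simpa using abs_sqrt_sub_sqrt_mul_le (s := 2 + x) (t := 2 + y) (c := 2) (by linarith)
      (by linarith) (by linarith)
  have outer : |√(2 - √(2 + x)) - √(2 - √(2 + y))| * 1 ≤ |√(2 + x) - √(2 + y)| := by
    simpa [abs_sub_comm] using
      abs_sqrt_sub_sqrt_mul_le (s := 2 - √(2 + x)) (t := 2 - √(2 + y)) (c := 1) (by linarith)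
        (by linarith) (by linarith)
  rw [parBranch, parBranch, ← mul_sub, abs_mul, abs_boolSign, one_mul]
  linarith

lemma abs_Fsel_fst_sub_le (b : Bool) {p q : ℝ × ℝ} (hp : p ∈ Par ∩ S) (hq : q ∈ Par ∩ S) :
    |(Fsel b p).1 - (Fsel b q).1| ≤ |p.1 - q.1| / 2 := by
  obtain ⟨hp₁, hp₂, -⟩ := bounds_of_mem_S hp.2
  obtain ⟨hq₁, hq₂, -⟩ := bounds_of_mem_S hq.2
  rw [Fsel_of_mem_Par_inter_S b hp, Fsel_of_mem_Par_inter_S b hq]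
  exact abs_parBranch_sub_le b ⟨hp₁, hp₂⟩ ⟨hq₁, hq₂⟩

end Parabola

section Composition

variable (ω : ℕ → Bool)

lemma Fcomp_succ (n : ℕ) : Fcomp ω (n + 1) = Fcomp ω n ∘ Fsel (ω n) := rfl

lemma Fcomp_succ' (n : ℕ) :
    Fcomp ω (n + 1) = Fsel (ω 0) ∘ Fcomp (fun k => ω (k + 1)) n := by
  induction n with
  | zero => rfl
  | succ n ih => rw [Fcomp_succ, ih]; rfl

lemma mapsTo_Fcomp {A : Set (ℝ × ℝ)} (hA : ∀ b, MapsTo (Fsel b) A A) (n : ℕ) :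
    MapsTo (Fcomp ω n) A A := by
  induction n with
  | zero => exact mapsTo_id A
  | succ n ih => exact ih.comp (hA _)

lemma continuousOn_Fcomp (n : ℕ) : ContinuousOn (Fcomp ω n) S := by
  induction n with
  | zero => exact continuousOn_id
  | succ n ih => exact ih.comp (continuousOn_Fsel _) (mapsTo_Fsel_S _)

lemma isCompact_image_Fcomp {A : Set (ℝ × ℝ)} (hA : IsCompact A) (hAS : A ⊆ S) (n : ℕ) :
    IsCompact (Fcomp ω n '' A) :=
  hA.image_of_continuousOn ((continuousOn_Fcomp ω n).mono hAS)

lemma image_Fcomp_succ_subset {n : ℕ} {A B : Set (ℝ × ℝ)} (h : MapsTo (Fsel (ω n)) A B) :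
    Fcomp ω (n + 1) '' A ⊆ Fcomp ω n '' B := by
  rw [Fcomp_succ, image_comp]
  exact image_mono h.image_subset

lemma mem_Par_of_Fcomp_mem_Par (n : ℕ) {p : ℝ × ℝ} (hp : p ∈ S) (h : Fcomp ω n p ∈ Par) :
    p ∈ Par := by
  induction n generalizing p with
  | zero => exact h
  | succ n ih => exact mem_Par_of_Fsel_mem_Par _ hp (ih (mapsTo_Fsel_S _ hp) h)

lemma abs_Fcomp_fst_sub_le (n : ℕ) {p q : ℝ × ℝ} (hp : p ∈ Par ∩ S) (hq : q ∈ Par ∩ S) :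
    |(Fcomp ω n p).1 - (Fcomp ω n q).1| ≤ (1 / 2) ^ n * |p.1 - q.1| := by
  induction n generalizing p q with
  | zero => simp [Fcomp]
  | succ n ih =>
    calc |(Fcomp ω n (Fsel (ω n) p)).1 - (Fcomp ω n (Fsel (ω n) q)).1|
        ≤ (1 / 2) ^ n * |(Fsel (ω n) p).1 - (Fsel (ω n) q).1| :=
          ih (mapsTo_Fsel_Par_inter_S _ hp) (mapsTo_Fsel_Par_inter_S _ hq)
      _ ≤ (1 / 2) ^ n * (|p.1 - q.1| / 2) := by gcongr; exact abs_Fsel_fst_sub_le _ hp hq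
      _ = (1 / 2) ^ (n + 1) * |p.1 - q.1| := by ring

end Composition

section TruncatedStrip

def truncStrip (m : ℝ) : Set (ℝ × ℝ) := S ∩ {q | -m ≤ q.2}

lemma isClosed_S : IsClosed S :=
  show IsClosed ({p : ℝ × ℝ | |p.1| ≤ 1} ∩ {p | p.2 ≤ p.1 ^ 2 - 2}) from
    (isClosed_le (by fun_prop) continuous_const).inter (isClosed_le continuous_snd (by fun_prop))

lemma isCompact_truncStrip (m : ℝ) : IsCompact (truncStrip m) := by
  refine (isCompact_Icc (a := ((-1 : ℝ), -m)) (b := (1, -1))).of_isClosed_subset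
    (isClosed_S.inter (isClosed_le continuous_const continuous_snd)) ?_
  rintro q ⟨hq, hqm⟩
  obtain ⟨h₁, h₂, h₃⟩ := bounds_of_mem_S hq
  exact ⟨⟨h₁, hqm⟩, h₂, h₃⟩

lemma starConvex_truncStrip {m : ℝ} (hm : 3 ≤ m) :
    StarConvex ℝ ((0 : ℝ), -m) (truncStrip m) := by
  rintro ⟨x, y⟩ ⟨⟨hx₁, hy⟩, hym⟩ a c ha hc hac
  have hym : -m ≤ y := hym
  have hx : x ^ 2 ≤ 1 := (sq_le_one_iff_abs_le_one _).mpr hx₁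
  obtain rfl : a = 1 - c := by linarith
  simp only [Prod.smul_mk, Prod.mk_add_mk, smul_eq_mul, mul_zero, zero_add]
  refine ⟨⟨?_, ?_⟩, ?_⟩
  · show |c * x| ≤ 1
    rw [abs_mul, abs_of_nonneg hc]
    nlinarith [abs_nonneg x]
  · show (1 - c) * -m + c * y ≤ (c * x) ^ 2 - 2
    nlinarith [mul_nonneg ha hc, mul_nonneg (mul_nonneg ha hc) (sub_nonneg.mpr hx)]
  · show -m ≤ (1 - c) * -m + c * y
    nlinarith

lemma isPreconnected_truncStrip {m : ℝ} (hm : 3 ≤ m) : IsPreconnected (truncStrip m) := by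
  have hmem : ((0 : ℝ), -m) ∈ truncStrip m :=
    ⟨⟨by simp, by show -m ≤ 0 ^ 2 - 2; linarith⟩, le_refl (-m)⟩
  exact ((starConvex_truncStrip hm).isPathConnected hmem).isConnected.isPreconnected

lemma truncStrip_mono {m m' : ℝ} (h : m ≤ m') : truncStrip m ⊆ truncStrip m' :=
  fun _ hq => ⟨hq.1, (neg_le_neg h).trans hq.2⟩

lemma mapsTo_Fsel_truncStrip (b : Bool) {m m' : ℝ} (hm : 0 ≤ m) (h : 2 + m' ≤ m ^ 2) :
    MapsTo (Fsel b) (truncStrip m') (truncStrip m) := by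
  rintro q ⟨hq, hqm⟩
  have hqm : -m' ≤ q.2 := hqm
  have hu := (sqrtRatio_sq_mem_Icc hq).2
  have hu₀ : 0 ≤ sqrtRatio q := sqrt_nonneg _
  refine ⟨mapsTo_Fsel_S b hq, ?_⟩
  show -m ≤ (Fsel b q).2
  rw [Fsel_snd]
  nlinarith

lemma Par_inter_S_subset_truncStrip : Par ∩ S ⊆ truncStrip 2 := by
  rintro q ⟨hq, hqS⟩
  have hq : q.2 = q.1 ^ 2 - 2 := hq
  exact ⟨hqS, show -2 ≤ q.2 by nlinarith [sq_nonneg q.1]⟩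

end TruncatedStrip

section ParabolaFiber

lemma Lambda_inter_Par (ω : ℕ → Bool) :
    Lambda ω ∩ Par = ⋂ n : ℕ, Fcomp ω (n + 1) '' (Par ∩ S) := by
  ext p
  simp only [Lambda, mem_inter_iff, mem_iInter, mem_image]
  constructor
  · rintro ⟨h, hp⟩ n
    obtain ⟨r, hr, rfl⟩ := h n
    exact ⟨r, ⟨mem_Par_of_Fcomp_mem_Par ω _ hr hp, hr⟩, rfl⟩
  · intro h
    refine ⟨fun n => ?_, ?_⟩
    · obtain ⟨r, hr, rfl⟩ := h n
      exact ⟨r, hr.2, rfl⟩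
    · obtain ⟨r, hr, rfl⟩ := h 0
      exact (mapsTo_Fcomp ω mapsTo_Fsel_Par_inter_S 1 hr).1

lemma isCompact_Par_inter_S : IsCompact (Par ∩ S) :=
  (isCompact_truncStrip 2).of_isClosed_subset
    ((isClosed_eq continuous_snd (by fun_prop)).inter isClosed_S) Par_inter_S_subset_truncStrip

lemma Lambda_inter_Par_nonempty (ω : ℕ → Bool) : (Lambda ω ∩ Par).Nonempty := by
  rw [Lambda_inter_Par]
  refine IsCompact.nonempty_iInter_of_sequence_nonempty_isCompact_isClosed _
    (fun n => image_Fcomp_succ_subset ω (mapsTo_Fsel_Par_inter_S _)) (fun n => ?_)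
    (isCompact_image_Fcomp ω isCompact_Par_inter_S inter_subset_right 1)
    (fun n => (isCompact_image_Fcomp ω isCompact_Par_inter_S inter_subset_right _).isClosed)
  exact ⟨_, mem_image_of_mem _ (show ((0 : ℝ), (-2 : ℝ)) ∈ Par ∩ S by norm_num [Par, S])⟩

lemma Lambda_inter_Par_subsingleton (ω : ℕ → Bool) : (Lambda ω ∩ Par).Subsingleton := by
  intro p hp q hq
  have hfst : ∀ n : ℕ, |p.1 - q.1| ≤ (1 / 2) ^ n := by
    intro n
    rw [Lambda_inter_Par] at hp hq
    obtain ⟨r, hr, rfl⟩ := mem_iInter.mp hp n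
    obtain ⟨s, hs, rfl⟩ := mem_iInter.mp hq n
    obtain ⟨hr₁, hr₂, -⟩ := bounds_of_mem_S hr.2
    obtain ⟨hs₁, hs₂, -⟩ := bounds_of_mem_S hs.2
    calc _ ≤ (1 / 2) ^ (n + 1) * |r.1 - s.1| := abs_Fcomp_fst_sub_le ω (n + 1) hr hs
      _ ≤ (1 / 2) ^ (n + 1) * 2 := by gcongr; exact abs_sub_le_iff.mpr ⟨by linarith, by linarith⟩
      _ = (1 / 2) ^ n := by ring
  have h₁ : p.1 = q.1 := by
    refine eq_of_forall_dist_le fun ε hε => ?_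
    obtain ⟨n, hn⟩ := exists_pow_lt_of_lt_one hε (by norm_num : (1 / 2 : ℝ) < 1)
    exact (hfst n).trans hn.le
  exact Prod.ext h₁ (by rw [show p.2 = _ from hp.2, show q.2 = _ from hq.2, h₁])

end ParabolaFiber

section Itinerary

lemma tmap_mem_Lambda_shift {ω : ℕ → Bool} {p : ℝ × ℝ} (hp : p ∈ Lambda ω) :
    tmap p ∈ Lambda (fun k => ω (k + 1)) := by
  refine mem_iInter.mpr fun n => ?_
  obtain ⟨r, hr, rfl⟩ := mem_iInter.mp hp (n + 1)
  rw [Fcomp_succ' ω (n + 1), Function.comp_apply,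
    tmap_Fsel _ (mapsTo_Fcomp _ mapsTo_Fsel_S _ hr)]
  exact mem_image_of_mem _ hr

lemma boolSign_mul_fst_pos_of_mem_Lambda {ω : ℕ → Bool} {p : ℝ × ℝ} (hp : p ∈ Lambda ω) :
    0 < boolSign (ω 0) * p.1 := by
  obtain ⟨r, hr, rfl⟩ := mem_iInter.mp hp 0
  exact boolSign_mul_Fsel_fst_pos _ hr

lemma eq_of_mem_Lambda_of_mem_Lambda {ω ω' : ℕ → Bool} {p : ℝ × ℝ} (hp : p ∈ Lambda ω)
    (hp' : p ∈ Lambda ω') : ω = ω' := by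
  funext n
  induction n generalizing ω ω' p with
  | zero =>
    have h := boolSign_mul_fst_pos_of_mem_Lambda hp
    have h' := boolSign_mul_fst_pos_of_mem_Lambda hp'
    cases hb : ω 0 <;> cases hb' : ω' 0 <;> simp only [hb, hb', boolSign] at h h' <;> grind
  | succ n ih => exact ih (tmap_mem_Lambda_shift hp) (tmap_mem_Lambda_shift hp')

end Itinerary

section Unbounded

def depthSeq (D : ℝ) : ℕ → ℝ
  | 0 => D
  | n + 1 => 3 * depthSeq D n ^ 2 - 2

lemma two_le_depthSeq {D : ℝ} (hD : 2 ≤ D) : ∀ n, 2 ≤ depthSeq D n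
  | 0 => hD
  | n + 1 => by
    have := two_le_depthSeq hD n
    simp only [depthSeq]
    nlinarith

variable (ω : ℕ → Bool) {D : ℝ}

lemma Fcomp_snd_le (hD : 2 ≤ D) (n : ℕ) {p : ℝ × ℝ} (hp : p ∈ S)
    (h : p.2 ≤ -depthSeq D n) : (Fcomp ω n p).2 ≤ -D := by
  induction n generalizing p with
  | zero => exact h
  | succ n ih =>
    refine ih (mapsTo_Fsel_S _ hp) ?_
    have hd := two_le_depthSeq hD n
    have hu := (sqrtRatio_sq_mem_Icc hp).1
    have hu₀ : 0 ≤ sqrtRatio p := sqrt_nonneg _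
    simp only [depthSeq] at h
    rw [Fsel_snd]
    nlinarith

/-- The cutoff `3 dₙ₊₁` keeps the tubes nested (`2 + 3 dₙ₊₂ ≤ (3 dₙ₊₁)²`) while they still contain
`Λ_ω ∩ 𝒫` and the point `(0, -dₙ₊₁)`, which `Fcomp ω (n + 1)` sends below height `-D`. -/
def tube (D : ℝ) (n : ℕ) : Set (ℝ × ℝ) :=
  Fcomp ω (n + 1) '' truncStrip (3 * depthSeq D (n + 1))

lemma isCompact_tube (D : ℝ) (n : ℕ) : IsCompact (tube ω D n) :=
  isCompact_image_Fcomp ω (isCompact_truncStrip _) inter_subset_left _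

lemma isPreconnected_tube (hD : 2 ≤ D) (n : ℕ) : IsPreconnected (tube ω D n) := by
  have := two_le_depthSeq hD (n + 1)
  exact (isPreconnected_truncStrip (by linarith)).image _
    ((continuousOn_Fcomp ω _).mono inter_subset_left)

lemma tube_succ_subset (hD : 2 ≤ D) (n : ℕ) : tube ω D (n + 1) ⊆ tube ω D n := by
  have := two_le_depthSeq hD (n + 1)
  refine image_Fcomp_succ_subset ω (mapsTo_Fsel_truncStrip _ (by linarith) ?_)
  simp only [depthSeq]
  nlinarith

lemma iInter_tube_subset_Lambda (D : ℝ) : ⋂ n, tube ω D n ⊆ Lambda ω :=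
  iInter_mono fun _ => image_mono inter_subset_left

lemma mem_tube {p : ℝ × ℝ} (hp : p ∈ Lambda ω ∩ Par) (hD : 2 ≤ D) (n : ℕ) :
    p ∈ tube ω D n := by
  rw [Lambda_inter_Par] at hp
  refine image_mono (Par_inter_S_subset_truncStrip.trans (truncStrip_mono ?_)) (mem_iInter.mp hp n)
  linarith [two_le_depthSeq hD (n + 1)]

lemma tube_inter_snd_le_nonempty (hD : 2 ≤ D) (n : ℕ) :
    (tube ω D n ∩ {z | z.2 ≤ -D}).Nonempty := by
  have hd := two_le_depthSeq hD (n + 1)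
  have hq : ((0 : ℝ), -depthSeq D (n + 1)) ∈ truncStrip (3 * depthSeq D (n + 1)) :=
    ⟨⟨by simp, show _ ≤ (0 : ℝ) ^ 2 - 2 by linarith⟩, show _ ≤ -depthSeq D (n + 1) by linarith⟩
  exact ⟨_, mem_image_of_mem _ hq, Fcomp_snd_le ω hD _ hq.1 le_rfl⟩

lemma exists_mem_connectedComponentIn_snd_le {p : ℝ × ℝ} (hp : p ∈ Lambda ω ∩ Par)
    (hD : 2 ≤ D) : ∃ z ∈ connectedComponentIn (Lambda ω) p, z.2 ≤ -D := by
  have hanti : Antitone (tube ω D) := antitone_nat_of_succ_le (tube_succ_subset ω hD)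
  have hsub : ⋂ n, tube ω D n ⊆ connectedComponentIn (Lambda ω) p :=
    (IsPreconnected.iInter_of_directed_isCompact hanti.directed_ge (isCompact_tube ω D)
      (isPreconnected_tube ω hD)).subset_connectedComponentIn
      (mem_iInter.mpr (mem_tube ω hp hD)) (iInter_tube_subset_Lambda ω D)
  have hclosed : IsClosed {z : ℝ × ℝ | z.2 ≤ -D} := isClosed_le continuous_snd continuous_const
  obtain ⟨z, hz⟩ := IsCompact.nonempty_iInter_of_sequence_nonempty_isCompact_isClosed
    (fun n => tube ω D n ∩ {z | z.2 ≤ -D})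
    (fun n => inter_subset_inter_left _ (tube_succ_subset ω hD n))
    (tube_inter_snd_le_nonempty ω hD) ((isCompact_tube ω D 0).inter_right hclosed)
    (fun n => (isCompact_tube ω D n).isClosed.inter hclosed)
  rw [mem_iInter] at hz
  exact ⟨z, hsub (mem_iInter.mpr fun n => (hz n).1), (hz 0).2⟩

lemma not_isBounded_connectedComponentIn {p : ℝ × ℝ} (hp : p ∈ Lambda ω ∩ Par) :
    ¬ Bornology.IsBounded (connectedComponentIn (Lambda ω) p) := by
  intro hb
  obtain ⟨r, hr⟩ := hb.subset_closedBall 0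
  obtain ⟨z, hz, hzD⟩ := exists_mem_connectedComponentIn_snd_le ω hp (le_max_left 2 (r + 1))
  have hzr : ‖z.2‖ ≤ r := (norm_snd_le z).trans (mem_closedBall_zero_iff.mp (hr hz))
  rw [Real.norm_eq_abs] at hzr
  linarith [neg_abs_le z.2, le_max_right 2 (r + 1)]

end Unbounded

/-- **Lemma (structure of the fibers `Λ_ω`).**
For every `ω ∈ {0,1}^ℕ` the set `p_ω = Λ_ω ∩ 𝒫` is nonempty and connected, the
connected component of `Λ_ω` containing `p_ω` is unbounded, and distinct fibers are
disjoint. -/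
theorem fiber_structure :
    (∀ ω : ℕ → Bool,
      (Lambda ω ∩ Par).Nonempty ∧ IsConnected (Lambda ω ∩ Par) ∧
      ∀ p ∈ Lambda ω ∩ Par,
        ¬ Bornology.IsBounded (connectedComponentIn (Lambda ω) p)) ∧
    (∀ ω ω' : ℕ → Bool, ω ≠ ω' → Lambda ω ∩ Lambda ω' = ∅) :=
  ⟨fun ω => ⟨Lambda_inter_Par_nonempty ω,
      ⟨Lambda_inter_Par_nonempty ω, (Lambda_inter_Par_subsingleton ω).isPreconnected⟩,
      fun _ hp => not_isBounded_connectedComponentIn ω hp⟩,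
    fun _ _ hne => eq_empty_iff_forall_notMem.mpr fun _ hp =>
      hne (eq_of_mem_Lambda_of_mem_Lambda hp.1 hp.2)⟩

end TMH
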